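/- Let q, d ≥ 2 be integers and let θ be an integer. Then the map n ↦ w_q(n) + θ·n is uniformly distributed modulo d; that is, for every integer x, the limit lim_{N→∞} (1/N)·|{n < N : w_q(n) + θ·n ≡ x (mod d)}| exists and equals 1/d. -/

import Mathlib

/-!
Write `f_θ(n) = w_q(n) + θ n`. Since `v_q` vanishes off the multiples of `q` and
`v_q(q m) = v_q(m) + 1`, one has `f_θ(q m + s) = f_{1 + q θ}(m) + θ s` for `s < q`. Hence for
`a ≠ 0` in `ZMod d` the Weyl sum `E_θ(N) = ∑_{n<N} e(a f_θ(n) / d)` satisfies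
`E_θ(q M + r) = T(a θ) E_{1 + q θ}(M) + O(q)` with `T(t) = ∑_{s<q} e(t s / d)`, and `|T(t)| ≤ c < q`
uniformly in `t ≠ 0`. Of two consecutive steps at least one has `t ≠ 0`, so dividing `N` by `q²`
costs a factor at most `q c < q²`, which gives `E_θ(N) = o(N)`; Weyl's criterion on `ZMod d`
concludes.
-/

open Filter

/-- `vq q n` is the `q`-adic valuation: `0` if `n = 0`, and otherwise the
largest `k` such that `q ^ k` divides `n`. -/
noncomputable def vq (q n : ℕ) : ℕ := if n = 0 then 0 else sSup {k : ℕ | q ^ k ∣ n}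

/-- `wq q n = ∑_{i=0}^n vq q i`. -/
noncomputable def wq (q n : ℕ) : ℕ := ∑ i ∈ Finset.range (n + 1), vq q i

open Topology

section Valuation

variable {q : ℕ}

lemma vq_eq_of_dvd_of_not_dvd {n k : ℕ} (hdvd : q ^ k ∣ n)
    (hndvd : ¬ q ^ (k + 1) ∣ n) : vq q n = k := by
  have hn : n ≠ 0 := by rintro rfl; exact hndvd (dvd_zero _)
  have hset : {j : ℕ | q ^ j ∣ n} = Set.Iic k := by
    ext j
    refine ⟨fun hj => ?_, fun hj => (pow_dvd_pow q hj).trans hdvd⟩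
    by_contra hkj
    exact hndvd ((pow_dvd_pow q (by simpa using hkj)).trans hj)
  simp [vq, hn, hset, csSup_Iic]

lemma vq_pow_mul (hq : q ≠ 0) (e : ℕ) {m : ℕ} (hm : ¬ q ∣ m) : vq q (q ^ e * m) = e := by
  refine vq_eq_of_dvd_of_not_dvd (dvd_mul_right _ _) fun h => hm ?_
  rw [pow_succ] at h
  exact (Nat.mul_dvd_mul_iff_left (by positivity)).mp h

lemma vq_eq_zero_of_not_dvd {n : ℕ} (hn : ¬ q ∣ n) : vq q n = 0 :=
  vq_eq_of_dvd_of_not_dvd (one_dvd n) (by simpa using hn)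

lemma vq_self_mul (hq : 2 ≤ q) {n : ℕ} (hn : n ≠ 0) : vq q (q * n) = vq q n + 1 := by
  obtain ⟨e, m, hm, rfl⟩ := Nat.exists_eq_pow_mul_and_not_dvd hn q (by omega)
  rw [← mul_assoc, ← pow_succ', vq_pow_mul (by omega) _ hm, vq_pow_mul (by omega) _ hm]

lemma wq_succ (q n : ℕ) : wq q (n + 1) = wq q n + vq q (n + 1) := Finset.sum_range_succ _ _

lemma wq_mul_add (m : ℕ) {s : ℕ} (hs : s < q) : wq q (q * m + s) = wq q (q * m) := by
  induction s with
  | zero => rfl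
  | succ s ih =>
    have hndvd : ¬ q ∣ q * m + (s + 1) := by
      rw [Nat.dvd_add_right (dvd_mul_right q m)]
      exact Nat.not_dvd_of_pos_of_lt (by omega) hs
    rw [← add_assoc, wq_succ, ih (by omega), add_assoc, vq_eq_zero_of_not_dvd hndvd, add_zero]

lemma wq_mul (hq : 2 ≤ q) (m : ℕ) : wq q (q * m) = m + wq q m := by
  induction m with
  | zero => simp [wq, vq]
  | succ m ih =>
    have hsplit : q * (m + 1) = q * m + (q - 1) + 1 := by rw [Nat.mul_succ]; omega
    rw [hsplit, wq_succ, wq_mul_add m (by omega), ← hsplit, vq_self_mul hq m.succ_ne_zero,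
      ih, wq_succ]
    ring

end Valuation

noncomputable def twistedWq (q : ℕ) (θ : ℤ) (n : ℕ) : ℤ := wq q n + θ * n

lemma twistedWq_mul_add {q : ℕ} (hq : 2 ≤ q) (θ : ℤ) (m : ℕ) {s : ℕ} (hs : s < q) :
    twistedWq q θ (q * m + s) = twistedWq q (1 + q * θ) m + θ * s := by
  simp only [twistedWq, wq_mul_add m hs, wq_mul hq]
  push_cast
  ring

lemma Finset.sum_range_mul_add {M : Type*} [AddCommMonoid M] (g : ℕ → M) (q m r : ℕ) :
    ∑ n ∈ Finset.range (q * m + r), g n =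
      ∑ i ∈ Finset.range m, ∑ s ∈ Finset.range q, g (q * i + s) +
        ∑ s ∈ Finset.range r, g (q * m + s) := by
  rw [Finset.sum_range_add]
  congr 1
  induction m with
  | zero => simp
  | succ m ih => rw [Finset.sum_range_succ, ← ih, Nat.mul_succ, Finset.sum_range_add]

section ExpSum

open ZMod

variable {d : ℕ} [NeZero d] {q : ℕ}

lemma ZMod.norm_stdAddChar (a : ZMod d) : ‖stdAddChar a‖ = 1 := Circle.norm_coe _

lemma norm_one_add_lt_two {z : ℂ} (hz : ‖z‖ = 1) (h1 : z ≠ 1) : ‖1 + z‖ < 2 := by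
  have hray : ¬ SameRay ℝ 1 z := fun h => h1 (h.eq_of_norm_eq (by simp [hz])).symm
  simpa [hz, one_add_one_eq_two] using norm_add_lt_of_not_sameRay hray

noncomputable def blockSum (q : ℕ) (t : ZMod d) : ℂ :=
  ∑ s ∈ Finset.range q, stdAddChar (t * (s : ZMod d))

lemma norm_sum_stdAddChar_le (s : Finset ℕ) (g : ℕ → ZMod d) :
    ‖∑ n ∈ s, stdAddChar (g n)‖ ≤ s.card := by
  simpa [norm_stdAddChar] using norm_sum_le s fun n => stdAddChar (g n)

lemma norm_blockSum_le (q : ℕ) (t : ZMod d) : ‖blockSum q t‖ ≤ q := by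
  simpa [blockSum] using norm_sum_stdAddChar_le (Finset.range q) (fun s => t * (s : ZMod d))

lemma norm_blockSum_lt (hq : 2 ≤ q) {t : ZMod d} (ht : t ≠ 0) : ‖blockSum q t‖ < q := by
  have hpair : ‖∑ s ∈ Finset.range 2, stdAddChar (t * (s : ZMod d))‖ < 2 := by
    have hne : stdAddChar t ≠ 1 := by
      rwa [← AddChar.map_zero_eq_one (stdAddChar (N := d)), injective_stdAddChar.ne_iff]
    simpa [Finset.sum_range_succ] using norm_one_add_lt_two (norm_stdAddChar t) hne
  have htail := norm_sum_stdAddChar_le (Finset.Ico 2 q) (fun s => t * (s : ZMod d))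
  rw [blockSum, ← Finset.sum_range_add_sum_Ico _ hq]
  calc _ ≤ _ := norm_add_le _ _
    _ < 2 + (Finset.Ico 2 q).card := by linarith
    _ = q := by rw [Nat.card_Ico, Nat.cast_sub hq]; ring

lemma exists_norm_blockSum_le (hq : 2 ≤ q) :
    ∃ c < (q : ℝ), ∀ t : ZMod d, t ≠ 0 → ‖blockSum q t‖ ≤ c := by
  let g : ZMod d → ℝ := fun t => if t = 0 then 0 else ‖blockSum q t‖
  obtain ⟨t₀, ht₀⟩ := Finite.exists_max g
  refine ⟨g t₀, ?_, fun t ht => by simpa [g, ht] using ht₀ t⟩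
  by_cases h : t₀ = 0
  · simp only [g, h, if_true]; positivity
  · simpa [g, h] using norm_blockSum_lt hq h

noncomputable def expSum (q : ℕ) (a : ZMod d) (θ : ℤ) (N : ℕ) : ℂ :=
  ∑ n ∈ Finset.range N, stdAddChar (a * (twistedWq q θ n : ZMod d))

lemma expSum_mul_add (hq : 2 ≤ q) (a : ZMod d) (θ : ℤ) (m r : ℕ) :
    expSum q a θ (q * m + r) = blockSum q (a * (θ : ZMod d)) * expSum q a (1 + q * θ) m +
      ∑ s ∈ Finset.range r, stdAddChar (a * (twistedWq q θ (q * m + s) : ZMod d)) := by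
  rw [expSum, Finset.sum_range_mul_add, blockSum, expSum, Finset.sum_mul_sum, Finset.sum_comm]
  congr 1
  refine Finset.sum_congr rfl fun s hs => Finset.sum_congr rfl fun i _ => ?_
  rw [twistedWq_mul_add hq θ i (Finset.mem_range.mp hs), ← AddChar.map_add_eq_mul]
  push_cast
  ring_nf

lemma norm_expSum_le (hq : 2 ≤ q) (a : ZMod d) (θ : ℤ) (N : ℕ) :
    ‖expSum q a θ N‖ ≤ ‖blockSum q (a * (θ : ZMod d))‖ * ‖expSum q a (1 + q * θ) (N / q)‖ + q := by
  rw [← Nat.div_add_mod N q, expSum_mul_add hq, Nat.mul_add_div (by omega),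
    Nat.mod_div_self, add_zero]
  refine (norm_add_le _ _).trans (add_le_add (norm_mul _ _).le ?_)
  refine (norm_sum_stdAddChar_le _ _).trans ?_
  simpa using (Nat.mod_lt N (by omega)).le

lemma norm_expSum_le_two_step (hq : 2 ≤ q) {c : ℝ} (hc : ∀ t : ZMod d, t ≠ 0 → ‖blockSum q t‖ ≤ c)
    {a : ZMod d} (ha : a ≠ 0) (θ : ℤ) (N : ℕ) :
    ‖expSum q a θ N‖ ≤
      q * c * ‖expSum q a (1 + q * (1 + q * θ)) (N / q ^ 2)‖ + (q ^ 2 + q) := by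
  set T₁ := ‖blockSum q (a * (θ : ZMod d))‖
  set T₂ := ‖blockSum q (a * ((1 + q * θ : ℤ) : ZMod d))‖
  set E := ‖expSum q a (1 + q * (1 + q * θ)) (N / q ^ 2)‖
  have hc0 : 0 ≤ c := (norm_nonneg _).trans (hc a ha)
  -- `a = a (1 + q θ) - q (a θ)`, so the two blocks cannot both be trivial.
  have hT : T₁ * T₂ ≤ q * c := by
    by_cases h : a * (θ : ZMod d) = 0
    · have h' : a * ((1 + q * θ : ℤ) : ZMod d) ≠ 0 := by
        push_cast
        rwa [mul_add, mul_one, mul_left_comm, h, mul_zero, add_zero]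
      exact mul_le_mul (norm_blockSum_le q _) (hc _ h') (norm_nonneg _) (by positivity)
    · calc T₁ * T₂ ≤ c * q := mul_le_mul (hc _ h) (norm_blockSum_le q _) (norm_nonneg _) hc0
        _ = q * c := mul_comm _ _
  have h₁ := norm_expSum_le hq a θ N
  have h₂ := norm_expSum_le hq a (1 + q * θ) (N / q)
  rw [Nat.div_div_eq_div_mul, ← pow_two] at h₂
  have hT₁ : T₁ ≤ q := norm_blockSum_le q _
  calc ‖expSum q a θ N‖ ≤ T₁ * (T₂ * E + q) + q := h₁.trans (by gcongr)
    _ = T₁ * T₂ * E + T₁ * q + q := by ring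
    _ ≤ q * c * E + q * q + q := by gcongr
    _ = q * c * E + (q ^ 2 + q) := by ring

end ExpSum

section Recursion

variable {ι : Type*} {E : ι → ℕ → ℝ} {σ : ι → ι} {b : ℕ} {ρ C : ℝ}

lemma le_mul_pow_of_le_mul_div_add (hb : 0 < b) (hρ : 1 ≤ ρ) (hC : 0 ≤ C)
    (hzero : ∀ i, E i 0 = 0) (hrec : ∀ i N, E i N ≤ ρ * E (σ i) (N / b) + C) (k : ℕ) :
    ∀ i N, N < b ^ k → E i N ≤ C * k * ρ ^ k := by
  induction k with
  | zero => intro i N hN; simp [Nat.lt_one_iff.mp (by simpa using hN), hzero]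
  | succ k ih =>
    intro i N hN
    have hNb : N / b < b ^ k := (Nat.div_lt_iff_lt_mul hb).mpr (by rwa [← pow_succ])
    have hρk : 1 ≤ ρ ^ (k + 1) := one_le_pow₀ hρ
    calc E i N ≤ ρ * (C * k * ρ ^ k) + C := (hrec i N).trans (by gcongr; exact ih _ _ hNb)
      _ ≤ ρ * (C * k * ρ ^ k) + C * ρ ^ (k + 1) := by gcongr; exact le_mul_of_one_le_right hC hρk
      _ = C * ↑(k + 1) * ρ ^ (k + 1) := by push_cast; ring

lemma tendsto_div_of_le_mul_div_add (hb : 2 ≤ b) (hρ : 1 ≤ ρ) (hρb : ρ < b)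
    (hnonneg : ∀ i N, 0 ≤ E i N) (hzero : ∀ i, E i 0 = 0)
    (hrec : ∀ i N, E i N ≤ ρ * E (σ i) (N / b) + C) (i : ι) :
    Tendsto (fun N : ℕ => E i N / N) atTop (𝓝 0) := by
  have hC : 0 ≤ C := by simpa [hzero] using hrec i 0
  have hb0 : (0 : ℝ) < b := by positivity
  set r := ρ / b
  have hk : Tendsto (fun N : ℕ => Nat.log b N + 1) atTop atTop :=
    (tendsto_add_atTop_nat 1).comp <| tendsto_atTop_atTop.mpr fun k =>
      ⟨b ^ k, fun N hN => Nat.le_log_of_pow_le (by omega) hN⟩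
  have hlim : Tendsto (fun k : ℕ => C * b * (k * r ^ k)) atTop (𝓝 0) := by
    simpa using (tendsto_self_mul_const_pow_of_lt_one (by positivity)
      ((div_lt_one hb0).mpr hρb)).const_mul (C * b)
  refine squeeze_zero' (Eventually.of_forall fun N => by have := hnonneg i N; positivity)
    ?_ (hlim.comp hk)
  filter_upwards [eventually_ge_atTop 1] with N hN
  set k := Nat.log b N
  have hlow : ((b : ℝ)) ^ k ≤ N := by exact_mod_cast Nat.pow_log_le_self b (by omega)
  have hE := le_mul_pow_of_le_mul_div_add (by omega) hρ hC hzero hrec (k + 1) i N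
    (Nat.lt_pow_succ_log_self (by omega) N)
  calc E i N / N ≤ C * ↑(k + 1) * ρ ^ (k + 1) / (b : ℝ) ^ k := by
        gcongr
    _ = C * b * (↑(k + 1) * r ^ (k + 1)) := by
        simp only [r, div_pow, pow_succ]; field_simp

end Recursion

open ZMod in
lemma ZMod.tendsto_card_filter_div_of_tendsto_sum_stdAddChar {d : ℕ} [NeZero d] (u : ℕ → ZMod d)
    (h : ∀ a : ZMod d, a ≠ 0 →
      Tendsto (fun N : ℕ => (∑ n ∈ Finset.range N, stdAddChar (a * u n)) / N) atTop (𝓝 0))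
    (x : ZMod d) :
    Tendsto (fun N : ℕ => (((Finset.range N).filter fun n => u n = x).card : ℝ) / N)
      atTop (𝓝 (1 / d)) := by
  set S : ZMod d → ℕ → ℂ := fun a N => (∑ n ∈ Finset.range N, stdAddChar (a * u n)) / N
  have hd : (d : ℂ) ≠ 0 := NeZero.ne _
  have hindicator : ∀ n, (if u n = x then (1 : ℂ) else 0) =
      (d : ℂ)⁻¹ * ∑ a : ZMod d, stdAddChar (-(a * x)) * stdAddChar (a * u n) := by
    intro n
    simp_rw [← AddChar.map_add_eq_mul, neg_add_eq_sub, ← mul_sub,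
      AddChar.sum_mulShift _ (isPrimitive_stdAddChar d), sub_eq_zero, ZMod.card]
    split_ifs <;> simp [hd]
  have hcount : ∀ N : ℕ, (((((Finset.range N).filter fun n => u n = x).card : ℝ) / N : ℝ) : ℂ) =
      (d : ℂ)⁻¹ * ∑ a : ZMod d, stdAddChar (-(a * x)) * S a N := by
    intro N
    push_cast
    rw [Finset.natCast_card_filter]
    simp_rw [hindicator, S, ← Finset.mul_sum]
    rw [Finset.sum_comm, mul_div_assoc, Finset.sum_div]
    simp_rw [← mul_div_assoc, Finset.mul_sum]
  have hS : ∀ a, Tendsto (S a) atTop (𝓝 (if a = 0 then 1 else 0)) := by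
    intro a
    split_ifs with ha
    · refine tendsto_const_nhds.congr' ?_
      filter_upwards [eventually_ne_atTop 0] with N hN
      simp [S, ha, hN]
    · exact h a ha
  have hsum := (tendsto_finsetSum Finset.univ fun a _ =>
    (hS a).const_mul (stdAddChar (-(a * x)))).const_mul (d : ℂ)⁻¹
  simp only [mul_ite, mul_one, mul_zero, Finset.sum_ite_eq', Finset.mem_univ, if_true, zero_mul,
    neg_zero, AddChar.map_zero_eq_one] at hsum
  rw [← tendsto_ofReal_iff, show ((1 / d : ℝ) : ℂ) = (d : ℂ)⁻¹ by simp]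
  exact hsum.congr fun N => (hcount N).symm

theorem stmt_11 (q d : ℕ) (hq : 2 ≤ q) (hd : 2 ≤ d) (θ : ℤ) (x : ℤ) :
    Tendsto
      (fun N : ℕ =>
        (((Finset.range N).filter fun n =>
            ((wq q n : ℤ) + θ * n) % (d : ℤ) = x % (d : ℤ)).card : ℝ) / N)
      atTop (nhds (1 / d)) := by
  have : NeZero d := ⟨by omega⟩
  obtain ⟨c, hcq, hc⟩ := exists_norm_blockSum_le (d := d) hq
  have hq' : (2 : ℝ) ≤ q := by exact_mod_cast hq
  have hρ : max (q * c) 1 < ((q ^ 2 : ℕ) : ℝ) := by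
    push_cast
    exact max_lt (by nlinarith) (by nlinarith)
  have hexp : ∀ a : ZMod d, a ≠ 0 → Tendsto (fun N : ℕ => expSum q a θ N / N) atTop (𝓝 0) := by
    intro a ha
    rw [tendsto_zero_iff_norm_tendsto_zero]
    simpa using tendsto_div_of_le_mul_div_add (E := fun θ N => ‖expSum q a θ N‖)
      (σ := fun θ => 1 + q * (1 + q * θ)) (by nlinarith) (le_max_right _ 1) hρ
      (fun _ _ => norm_nonneg _) (fun _ => by simp [expSum])
      (fun θ N => (norm_expSum_le_two_step hq hc ha θ N).trans (by gcongr; exact le_max_left _ _))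
      θ
  simpa only [ZMod.intCast_eq_intCast_iff', twistedWq] using
    ZMod.tendsto_card_filter_div_of_tendsto_sum_stdAddChar (fun n => (twistedWq q θ n : ZMod d))
      hexp x
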